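/- arXiv:2212.03540 — 2 statements merged into one kernel-verified Lean document; each statement's English description precedes it below -/
import Mathlib

section
/- Define the EASpace action value iteration operator on Q : S × M → ℝ, where M = {m^i(τ)} is a finite set of macro actions each with a duration τ ≥ 1 and lower-level action a = π^i(s): (HQ)(s, m^i(τ)) = ∑_{s'} P(s'|s,a)(r + γ max_m Q(s',m)) if τ = 1, and (HQ)(s, m^i(τ)) = ∑_{s'} P(s'|s,a)(r + γ Q(s', m^i(τ−1))) if τ > 1. Then H is a γ-contraction with respect to the supremum norm: ‖HQ_j − HQ_k‖_∞ ≤ γ‖Q_j − Q_k‖_∞ for all Q_j, Q_k. -/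
/-! Both branches of `H` are an average, under `P(·|s,m)`, of `r + γ · v` for a continuation
value `v` that is either a single entry of `Q` or a maximum of entries of `Q`. Taking maxima is
1-Lipschitz in the sup norm and averaging does not increase it, so `H` shrinks sup-distances by `γ`. -/

open Finset

lemma Finset.abs_sup'_sub_sup'_le {ι α : Type*} [AddCommGroup α] [LinearOrder α]
    [IsOrderedAddMonoid α] {s : Finset ι} (hs : s.Nonempty) {f g : ι → α} {K : α}
    (h : ∀ i ∈ s, |f i - g i| ≤ K) : |s.sup' hs f - s.sup' hs g| ≤ K := by
  have sup'_le_sup'_add {f g : ι → α} (h : ∀ i ∈ s, |f i - g i| ≤ K) :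
      s.sup' hs f ≤ s.sup' hs g + K :=
    sup'_le hs f fun i hi => calc
      f i ≤ g i + K := sub_le_iff_le_add'.1 (abs_sub_le_iff.1 (h i hi)).1
      _ ≤ s.sup' hs g + K := add_le_add_left (le_sup' g hi) K
  rw [abs_sub_le_iff, sub_le_iff_le_add', sub_le_iff_le_add']
  exact ⟨sup'_le_sup'_add h, sup'_le_sup'_add fun i hi => abs_sub_comm (g i) (f i) ▸ h i hi⟩

lemma abs_sum_mul_sub_sum_mul_le {ι : Type*} (s : Finset ι) {w u v : ι → ℝ} {K : ℝ}
    (hw0 : ∀ i ∈ s, 0 ≤ w i) (hw1 : ∑ i ∈ s, w i = 1) (h : ∀ i ∈ s, |u i - v i| ≤ K) :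
    |∑ i ∈ s, w i * u i - ∑ i ∈ s, w i * v i| ≤ K :=
  calc |∑ i ∈ s, w i * u i - ∑ i ∈ s, w i * v i|
      = |∑ i ∈ s, w i * (u i - v i)| := by simp only [mul_sub, sum_sub_distrib]
    _ ≤ ∑ i ∈ s, |w i * (u i - v i)| := abs_sum_le_sum_abs _ _
    _ ≤ ∑ i ∈ s, w i * K := sum_le_sum fun i hi => by
        rw [abs_mul, abs_of_nonneg (hw0 i hi)]
        exact mul_le_mul_of_nonneg_left (h i hi) (hw0 i hi)
    _ = K := by rw [← sum_mul, hw1, one_mul]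

lemma abs_sum_mul_add_mul_sub_le {ι : Type*} (s : Finset ι) {w r u v : ι → ℝ} {γ K : ℝ}
    (hγ : 0 ≤ γ) (hw0 : ∀ i ∈ s, 0 ≤ w i) (hw1 : ∑ i ∈ s, w i = 1)
    (h : ∀ i ∈ s, |u i - v i| ≤ K) :
    |∑ i ∈ s, w i * (r i + γ * u i) - ∑ i ∈ s, w i * (r i + γ * v i)| ≤ γ * K := by
  have hsplit (x : ι → ℝ) : ∑ i ∈ s, w i * (r i + γ * x i) =
      ∑ i ∈ s, w i * r i + γ * ∑ i ∈ s, w i * x i := by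
    simp only [mul_add, sum_add_distrib, mul_sum]
    congr 1
    exact sum_congr rfl fun i _ => by ring
  rw [hsplit, hsplit, add_sub_add_left_eq_sub, ← mul_sub, abs_mul, abs_of_nonneg hγ]
  exact mul_le_mul_of_nonneg_left (abs_sum_mul_sub_sum_mul_le s hw0 hw1 h) hγ

theorem stmt3_general {S M : Type*} [Fintype S] [Fintype M] [Nonempty S] [Nonempty M]
    (dur : M → ℕ) (succ : M → M)
    (P : S → M → S → ℝ) (hP0 : ∀ s m s', 0 ≤ P s m s') (hP1 : ∀ s m, ∑ s', P s m s' = 1)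
    (r : S → M → S → ℝ) (γ : ℝ) (hγ : γ ∈ Set.Ioo (0 : ℝ) 1)
    (H : ((S × M) → ℝ) → (S × M) → ℝ)
    (hH : ∀ (Q : (S × M) → ℝ) (s : S) (m : M),
      H Q (s, m) =
        if dur m = 1 then
          ∑ s', P s m s' * (r s m s' +
            γ * Finset.univ.sup' Finset.univ_nonempty (fun m' => Q (s', m')))
        else
          ∑ s', P s m s' * (r s m s' + γ * Q (s', succ m)))
    (Qj Qk : (S × M) → ℝ) :
    Finset.univ.sup' Finset.univ_nonempty (fun p : S × M => |H Qj p - H Qk p|) ≤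
      γ * Finset.univ.sup' Finset.univ_nonempty (fun p : S × M => |Qj p - Qk p|) := by
  set K := univ.sup' univ_nonempty fun p : S × M => |Qj p - Qk p|
  have hK (s : S) (m : M) : |Qj (s, m) - Qk (s, m)| ≤ K :=
    le_sup' (fun p : S × M => |Qj p - Qk p|) (mem_univ (s, m))
  refine sup'_le _ _ fun ⟨s, m⟩ _ => ?_
  rw [hH, hH]
  split_ifs
  · exact abs_sum_mul_add_mul_sub_le univ hγ.1.le (fun s' _ => hP0 s m s') (hP1 s m)
      fun s' _ => univ.abs_sup'_sub_sup'_le univ_nonempty fun m' _ => hK s' m'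
  · exact abs_sum_mul_add_mul_sub_le univ hγ.1.le (fun s' _ => hP0 s m s') (hP1 s m)
      fun s' _ => hK s' (succ m)

/-- The EASpace action value iteration operator is a `γ`-contraction in the sup norm. -/
theorem stmt3 {S M : Type*} [Fintype S] [Fintype M] [Nonempty S] [Nonempty M]
    (dur : M → ℕ) (hdur : ∀ m, 1 ≤ dur m) (succ : M → M)
    (P : S → M → S → ℝ) (hP0 : ∀ s m s', 0 ≤ P s m s') (hP1 : ∀ s m, ∑ s', P s m s' = 1)
    (r : S → M → S → ℝ) (γ : ℝ) (hγ : γ ∈ Set.Ioo (0 : ℝ) 1)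
    (H : ((S × M) → ℝ) → (S × M) → ℝ)
    (hH : ∀ (Q : (S × M) → ℝ) (s : S) (m : M),
      H Q (s, m) =
        if dur m = 1 then
          ∑ s', P s m s' * (r s m s' +
            γ * Finset.univ.sup' Finset.univ_nonempty (fun m' => Q (s', m')))
        else
          ∑ s', P s m s' * (r s m s' + γ * Q (s', succ m)))
    (Qj Qk : (S × M) → ℝ) :
    Finset.univ.sup' Finset.univ_nonempty (fun p : S × M => |H Qj p - H Qk p|) ≤
      γ * Finset.univ.sup' Finset.univ_nonempty (fun p : S × M => |Qj p - Qk p|) :=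
  stmt3_general dur succ P hP0 hP1 r γ hγ H hH Qj Qk
end

section
/- Let Δ_{n+1} = (1 − α_n)Δ_n + α_n F_n, where Δ_n, F_n ≥ 0 are real, α_n ∈ [0,1], and suppose F_n ≤ γ Δ_n + ε for all n, with γ ∈ (0,1), ε ≥ 0, and ∑_n α_n = ∞. Then limsup_n Δ_n ≤ ε/(1 − γ). -/
/-! The gap `Δ n - ε / (1 - γ)` contracts by the factor `1 - (1 - γ) α n` at each step, so its
positive part is at most its initial value times `∏ (1 - (1 - γ) α k) ≤ exp (-(1 - γ) ∑ α k)`,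
which tends to `0` because `∑ α` diverges. -/

open Filter Finset Topology

theorem Real.prod_one_sub_le_exp_neg_sum {ι : Type*} (s : Finset ι) {f : ι → ℝ}
    (hf : ∀ i ∈ s, f i ≤ 1) : ∏ i ∈ s, (1 - f i) ≤ Real.exp (-∑ i ∈ s, f i) :=
  calc ∏ i ∈ s, (1 - f i)
      ≤ ∏ i ∈ s, Real.exp (-f i) :=
        prod_le_prod (fun i hi ↦ sub_nonneg.2 (hf i hi)) fun i _ ↦ Real.one_sub_le_exp_neg _
    _ = Real.exp (-∑ i ∈ s, f i) := by rw [← Real.exp_sum, sum_neg_distrib]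

theorem le_mul_prod_range_of_le_mul_succ {u c : ℕ → ℝ} (hc : ∀ n, 0 ≤ c n)
    (hu : ∀ n, u (n + 1) ≤ c n * u n) (n : ℕ) : u n ≤ u 0 * ∏ k ∈ range n, c k := by
  induction n with
  | zero => simp
  | succ n ih =>
    calc u (n + 1) ≤ c n * u n := hu n
      _ ≤ c n * (u 0 * ∏ k ∈ range n, c k) := mul_le_mul_of_nonneg_left ih (hc n)
      _ = u 0 * ∏ k ∈ range (n + 1), c k := by rw [prod_range_succ]; ring

theorem tendsto_zero_of_succ_le_one_sub_mul {u β : ℕ → ℝ} (hu : ∀ n, 0 ≤ u n)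
    (hβ : ∀ n, β n ≤ 1) (hdiv : Tendsto (fun N ↦ ∑ n ∈ range N, β n) atTop atTop)
    (hstep : ∀ n, u (n + 1) ≤ (1 - β n) * u n) : Tendsto u atTop (𝓝 0) := by
  have hbound (n : ℕ) : u n ≤ u 0 * Real.exp (-∑ k ∈ range n, β k) :=
    (le_mul_prod_range_of_le_mul_succ (fun k ↦ sub_nonneg.2 (hβ k)) hstep n).trans
      (mul_le_mul_of_nonneg_left (Real.prod_one_sub_le_exp_neg_sum _ fun k _ ↦ hβ k) (hu 0))
  have hexp : Tendsto (fun n ↦ u 0 * Real.exp (-∑ k ∈ range n, β k)) atTop (𝓝 0) := by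
    simpa using (Real.tendsto_exp_atBot.comp (tendsto_neg_atTop_atBot.comp hdiv)).const_mul (u 0)
  exact tendsto_of_tendsto_of_tendsto_of_le_of_le tendsto_const_nhds hexp hu hbound

theorem sub_div_one_sub_le_of_le_mul_add {γ ε a d f : ℝ} (hγ : γ ≠ 1) (ha : 0 ≤ a)
    (hf : f ≤ γ * d + ε) :
    (1 - a) * d + a * f - ε / (1 - γ) ≤ (1 - (1 - γ) * a) * (d - ε / (1 - γ)) := by
  have hγ' : 1 - γ ≠ 0 := sub_ne_zero.2 hγ.symm
  have key : (1 - (1 - γ) * a) * (d - ε / (1 - γ))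
      = (1 - a) * d + a * (γ * d + ε) - ε / (1 - γ) := by
    field_simp
    ring
  rw [key]
  gcongr

theorem stmt12_general (γ ε : ℝ) (hγ : γ ∈ Set.Ioo (0 : ℝ) 1)
    (α : ℕ → ℝ) (hα : ∀ n, α n ∈ Set.Icc (0 : ℝ) 1)
    (hdiv : Filter.Tendsto (fun N => ∑ n ∈ Finset.range N, α n) Filter.atTop Filter.atTop)
    (Δ F : ℕ → ℝ) (hΔ : ∀ n, 0 ≤ Δ n)
    (hrec : ∀ n, Δ (n + 1) = (1 - α n) * Δ n + α n * F n)
    (hFB : ∀ n, F n ≤ γ * Δ n + ε) :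
    Filter.limsup Δ Filter.atTop ≤ ε / (1 - γ) := by
  obtain ⟨hγ0, hγ1⟩ := hγ
  set L := ε / (1 - γ)
  have hβ (n : ℕ) : (1 - γ) * α n ≤ 1 := by
    obtain ⟨h0, h1⟩ := hα n
    nlinarith
  have hstep (n : ℕ) :
      max (Δ (n + 1) - L) 0 ≤ (1 - (1 - γ) * α n) * max (Δ n - L) 0 := by
    refine max_le ?_ (mul_nonneg (sub_nonneg.2 (hβ n)) (le_max_right _ _))
    rw [hrec n]
    exact (sub_div_one_sub_le_of_le_mul_add hγ1.ne (hα n).1 (hFB n)).trans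
      (mul_le_mul_of_nonneg_left (le_max_left _ _) (sub_nonneg.2 (hβ n)))
  have hgap : Tendsto (fun n ↦ max (Δ n - L) 0) atTop (𝓝 0) :=
    tendsto_zero_of_succ_le_one_sub_mul (fun n ↦ le_max_right _ _) hβ
      (by simpa [mul_sum] using hdiv.const_mul_atTop (sub_pos.2 hγ1)) hstep
  have hlim : Tendsto (fun n ↦ L + max (Δ n - L) 0) atTop (𝓝 L) := by
    simpa using hgap.const_add L
  calc limsup Δ atTop ≤ limsup (fun n ↦ L + max (Δ n - L) 0) atTop :=
        limsup_le_limsup (Eventually.of_forall fun n ↦ by linarith [le_max_left (Δ n - L) 0])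
          (isCoboundedUnder_le_of_le atTop hΔ) hlim.isBoundedUnder_le
    _ = L := hlim.limsup_eq

theorem stmt12 (γ ε : ℝ) (hγ : γ ∈ Set.Ioo (0 : ℝ) 1) (hε : 0 ≤ ε)
    (α : ℕ → ℝ) (hα : ∀ n, α n ∈ Set.Icc (0 : ℝ) 1)
    (hdiv : Filter.Tendsto (fun N => ∑ n ∈ Finset.range N, α n) Filter.atTop Filter.atTop)
    (Δ F : ℕ → ℝ) (hΔ : ∀ n, 0 ≤ Δ n) (hF : ∀ n, 0 ≤ F n)
    (hrec : ∀ n, Δ (n + 1) = (1 - α n) * Δ n + α n * F n)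
    (hFB : ∀ n, F n ≤ γ * Δ n + ε) :
    Filter.limsup Δ Filter.atTop ≤ ε / (1 - γ) :=
  stmt12_general γ ε hγ α hα hdiv Δ F hΔ hrec hFB
end
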